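/- Let ν, d > 0 with γ = −2/(ν+d), and let q_ν ~ t_d(μ₀,Σ₀,ν), p_ν ~ t_d(μ₁,Σ₁,ν). Then the closed-form γ-power divergence D_γ(q_ν‖p_ν) given by Equation (12) of the paper converges, as ν → ∞ (equivalently γ → 0), to the KL divergence between the Gaussians N_d(μ₀,Σ₀) and N_d(μ₁,Σ₁), namely (1/2)[log(|Σ₁|/|Σ₀|) − d + tr(Σ₁^{−1}Σ₀) + (μ₀−μ₁)^⊤Σ₁^{−1}(μ₀−μ₁)]. -/

import Mathlib

open MeasureTheory Matrix Filter

noncomputable def tC (ν : ℝ) (d : ℕ) : ℝ :=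
  Real.Gamma ((ν + d) / 2) / (Real.Gamma (ν / 2) * (ν * Real.pi) ^ ((d : ℝ) / 2))

/-- The coupled power `γ = −2/(ν+d)`. -/
noncomputable def gam (d : ℕ) (ν : ℝ) : ℝ := -2 / (ν + d)

/-- The closed-form γ-power divergence (Equation (12) of the paper) from
`t_d(μ₀,Σ₀,ν)` to `t_d(μ₁,Σ₁,ν)`, with `γ = −2/(ν+d)`, as a function of ν. -/
noncomputable def Dgamma_tt (d : ℕ) (μ₀ μ₁ : Fin d → ℝ)
    (S₀ S₁ : Matrix (Fin d) (Fin d) ℝ) (ν : ℝ) : ℝ :=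
  -(1 / gam d ν) * tC ν d ^ (gam d ν / (1 + gam d ν)) *
    (1 + d / (ν - 2)) ^ (-(gam d ν / (1 + gam d ν))) *
    (-(S₀.det ^ (-(gam d ν / (2 * (1 + gam d ν))))) * (1 + d / (ν - 2))
      + S₁.det ^ (-(gam d ν / (2 * (1 + gam d ν)))) *
        (1 + (1 / (ν - 2)) * (S₁⁻¹ * S₀).trace
          + (1 / ν) * ((μ₀ - μ₁) ⬝ᵥ (S₁⁻¹ *ᵥ (μ₀ - μ₁)))))

/-- The KL divergence between the Gaussians `N_d(μ₀,Σ₀)` and `N_d(μ₁,Σ₁)`. -/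
noncomputable def klGauss (d : ℕ) (μ₀ μ₁ : Fin d → ℝ)
    (S₀ S₁ : Matrix (Fin d) (Fin d) ℝ) : ℝ :=
  (1 / 2) * (Real.log (S₁.det / S₀.det) - d + (S₁⁻¹ * S₀).trace
    + (μ₀ - μ₁) ⬝ᵥ (S₁⁻¹ *ᵥ (μ₀ - μ₁)))

open Filter Real Set Topology Asymptotics

/-!
Write `γ = -2/(ν+d) → 0`, so that `-1/γ = (ν+d)/2`. The factor `C_{ν,d}^{γ/(1+γ)}` tends to `1`
because `νγ → -2` while `log C_{ν,d} = o(ν)`: this weak form of Stirling's approximation follows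
from `0 ≤ log Γ(x+h) - log Γ(x) ≤ h log(x+h)` for `x ≥ 2`, a consequence of the monotonicity and
log-convexity of `Γ`. The factor `(1 + d/(ν-2))^{-γ/(1+γ)}` tends to `1` as well. In the last
factor put `s = -γ/(2(1+γ))`, so that `s → 0` and `-s/γ → 1/2`; then `-(1/γ)(|Σ|^s - 1)` tends to
half the derivative of `s ↦ |Σ|^s` at `0`, i.e. to `log |Σ| / 2`, and the remaining terms tend
to `(-d + tr(Σ₁⁻¹Σ₀) + (μ₀-μ₁)ᵀΣ₁⁻¹(μ₀-μ₁))/2`.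
-/

lemma isLittleO_log_mul_add_atTop {a : ℝ} (ha : 0 < a) (b : ℝ) :
    (fun x => log (a * x + b)) =o[atTop] fun x => x := by
  have hlin : Tendsto (fun x => a * x + b) atTop atTop :=
    tendsto_atTop_add_const_right _ b (tendsto_id.const_mul_atTop ha)
  refine (isLittleO_log_id_atTop.comp_tendsto hlin).trans_isBigO ?_
  exact ((isBigO_refl _ _).const_mul_left a).add (isLittleO_const_id_atTop b).isBigO

lemma tendsto_add_div_add_atTop (a b : ℝ) : Tendsto (fun x => (x + a) / (x + b)) atTop (𝓝 1) := by
  have hden : Tendsto (fun x : ℝ => x + b) atTop atTop :=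
    tendsto_atTop_add_const_right atTop b tendsto_id
  have := (tendsto_const_nhds (x := a - b)).div_atTop hden |>.const_add 1
  rw [add_zero] at this
  refine this.congr' ?_
  filter_upwards [hden.eventually_gt_atTop 0] with x hx
  field_simp
  ring

lemma tendsto_mul_rpow_sub_one {α : Type*} {l : Filter α} {k s : α → ℝ} {r a : ℝ} (ha : 0 < a)
    (hs : Tendsto s l (𝓝[≠] 0)) (hks : Tendsto (fun x => k x * s x) l (𝓝 r)) :
    Tendsto (fun x => k x * (a ^ s x - 1)) l (𝓝 (r * log a)) := by
  have hslope := hasDerivAt_iff_tendsto_slope_zero.mp (hasStrictDerivAt_const_rpow ha 0).hasDerivAt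
  simp only [zero_add, rpow_zero, one_mul, smul_eq_mul] at hslope
  refine ((hks.mul (hslope.comp hs)).congr' ?_)
  filter_upwards [tendsto_nhdsWithin_iff.mp hs |>.2] with x hx
  simp only [Function.comp, mul_assoc, mul_inv_cancel_left₀ (show s x ≠ 0 from hx)]

lemma log_Gamma_add_sub_log_Gamma_le {x h : ℝ} (hx : 0 < x) (hh : 0 ≤ h) :
    log (Gamma (x + h)) - log (Gamma x) ≤ h * log (x + h) := by
  rcases hh.eq_or_lt with rfl | hh
  · simp
  have hxh : 0 < x + h := by linarith
  have hslope := convexOn_log_Gamma.slope_mono_adjacent (x := x) (y := x + h) (z := x + h + 1)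
    hx (by simp only [mem_Ioi]; linarith) (by linarith) (by linarith)
  simp only [Function.comp, add_sub_cancel_left, Gamma_add_one hxh.ne',
    log_mul hxh.ne' (Gamma_pos_of_pos hxh).ne', add_sub_cancel_right, div_one] at hslope
  rwa [div_le_iff₀ hh, mul_comm] at hslope

lemma tendsto_log_Gamma_add_sub_log_Gamma_div {h : ℝ} (hh : 0 ≤ h) :
    Tendsto (fun x => (log (Gamma (x + h)) - log (Gamma x)) / x) atTop (𝓝 0) := by
  have hupper : Tendsto (fun x => h * log (x + h) / x) atTop (𝓝 0) := by
    simpa [mul_div_assoc] using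
      ((isLittleO_log_mul_add_atTop one_pos h).tendsto_div_nhds_zero).const_mul h
  refine tendsto_of_tendsto_of_tendsto_of_le_of_le' tendsto_const_nhds hupper ?_ ?_
  · filter_upwards [eventually_ge_atTop 2] with x hx
    have hmono := Gamma_strictMonoOn_Ici.monotoneOn (a := x) (b := x + h) hx
      (by simp only [mem_Ici]; linarith) (by linarith)
    have := log_le_log (Gamma_pos_of_pos (by linarith)) hmono
    positivity
  · filter_upwards [eventually_gt_atTop 0] with x hx
    exact div_le_div_of_nonneg_right (log_Gamma_add_sub_log_Gamma_le hx hh) hx.le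

lemma tC_pos (d : ℕ) {ν : ℝ} (hν : 0 < ν) : 0 < tC ν d := by
  have := Gamma_pos_of_pos (show 0 < (ν + d) / 2 by positivity)
  have := Gamma_pos_of_pos (show 0 < ν / 2 by positivity)
  unfold tC
  positivity

lemma log_tC (d : ℕ) {ν : ℝ} (hν : 0 < ν) :
    log (tC ν d) = log (Gamma (ν / 2 + d / 2)) - log (Gamma (ν / 2)) - d / 2 * log (π * ν) := by
  have h₁ := Gamma_pos_of_pos (show 0 < ν / 2 by positivity)
  have h₂ := Gamma_pos_of_pos (show 0 < ν / 2 + d / 2 by positivity)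
  unfold tC
  rw [add_div, log_div h₂.ne' (by positivity), log_mul h₁.ne' (by positivity),
    log_rpow (by positivity), mul_comm ν]
  ring

lemma tendsto_log_tC_div (d : ℕ) : Tendsto (fun ν => log (tC ν d) / ν) atTop (𝓝 0) := by
  have hGamma := (tendsto_log_Gamma_add_sub_log_Gamma_div (h := d / 2) (by positivity)).comp
    (tendsto_id.atTop_div_const two_pos)
  have hlog := (isLittleO_log_mul_add_atTop pi_pos 0).tendsto_div_nhds_zero
  have := (hGamma.div_const 2).sub (hlog.const_mul ((d : ℝ) / 2))
  simp only [zero_div, mul_zero, sub_zero, add_zero] at this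
  refine this.congr' ?_
  filter_upwards [eventually_gt_atTop 0] with ν hν
  simp only [Function.comp, id, log_tC d hν]
  field_simp

lemma gam_mem_Ioo (d : ℕ) {ν : ℝ} (hν : 2 < ν) : gam d ν ∈ Ioo (-1) 0 := by
  have hνd : 2 < ν + d := by have := d.cast_nonneg (α := ℝ); linarith
  refine ⟨?_, div_neg_of_neg_of_pos (by norm_num) (by linarith)⟩
  rw [gam, lt_div_iff₀ (by linarith)]
  linarith

lemma tendsto_gam (d : ℕ) : Tendsto (gam d) atTop (𝓝 0) :=
  tendsto_const_nhds.div_atTop (tendsto_atTop_add_const_right atTop _ tendsto_id)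

lemma neg_one_div_gam (d : ℕ) (ν : ℝ) : -(1 / gam d ν) = (ν + d) / 2 := by
  rw [gam, one_div_div]
  ring

lemma tendsto_mul_gam (d : ℕ) : Tendsto (fun ν => ν * gam d ν) atTop (𝓝 (-2)) := by
  have := ((tendsto_gam d).const_mul (d : ℝ)).const_sub (-2)
  rw [mul_zero, sub_zero] at this
  refine this.congr' ?_
  filter_upwards [eventually_gt_atTop 0] with ν hν
  have : ν + d ≠ 0 := by positivity
  simp only [gam]
  field_simp
  ring

lemma tendsto_tC_rpow (d : ℕ) :
    Tendsto (fun ν => tC ν d ^ (gam d ν / (1 + gam d ν))) atTop (𝓝 1) := by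
  have hexponent := (tendsto_log_tC_div d).mul
    ((tendsto_mul_gam d).div ((tendsto_gam d).const_add 1) (by norm_num))
  rw [zero_mul] at hexponent
  have := (continuous_exp.tendsto 0).comp hexponent
  rw [exp_zero] at this
  refine this.congr' ?_
  filter_upwards [eventually_gt_atTop 0] with ν hν
  rw [Function.comp, Pi.div_apply, rpow_def_of_pos (tC_pos d hν)]
  field_simp

lemma tendsto_one_add_div_rpow (d : ℕ) :
    Tendsto (fun ν => (1 + d / (ν - 2)) ^ (-(gam d ν / (1 + gam d ν)))) atTop (𝓝 1) := by
  have hbase : Tendsto (fun ν : ℝ => 1 + d / (ν - 2)) atTop (𝓝 1) := by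
    refine (tendsto_add_div_add_atTop (d - 2) (-2)).congr' ?_
    filter_upwards [eventually_gt_atTop 2] with ν hν
    have : ν + -2 ≠ 0 := by linarith
    field_simp
    ring
  have hexponent := ((tendsto_gam d).div ((tendsto_gam d).const_add 1) (by norm_num)).neg
  simpa using hbase.rpow hexponent (by norm_num)

lemma tendsto_neg_one_div_gam_mul_bracket (d : ℕ) {a c : ℝ} (ha : 0 < a) (hc : 0 < c) (t q : ℝ) :
    Tendsto (fun ν => -(1 / gam d ν) *
      (-(a ^ (-(gam d ν / (2 * (1 + gam d ν))))) * (1 + d / (ν - 2))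
        + c ^ (-(gam d ν / (2 * (1 + gam d ν)))) * (1 + (1 / (ν - 2)) * t + (1 / ν) * q)))
      atTop (𝓝 ((log c - log a - d + t + q) / 2)) := by
  set k : ℝ → ℝ := fun ν => -(1 / gam d ν)
  set s : ℝ → ℝ := fun ν => -(gam d ν / (2 * (1 + gam d ν)))
  have hs : Tendsto s atTop (𝓝[≠] 0) := by
    refine tendsto_nhdsWithin_iff.mpr ⟨?_, ?_⟩
    · simpa using ((tendsto_gam d).div (((tendsto_gam d).const_add 1).const_mul 2)
        (by norm_num)).neg
    · filter_upwards [eventually_gt_atTop 2] with ν hν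
      obtain ⟨hlo, hhi⟩ := gam_mem_Ioo d hν
      have : 0 < 2 * (1 + gam d ν) := by linarith
      exact neg_ne_zero.mpr (div_neg_of_neg_of_pos hhi this).ne
  have hks : Tendsto (fun ν => k ν * s ν) atTop (𝓝 (1 / 2)) := by
    have := (((tendsto_gam d).const_add 1).const_mul 2).inv₀ (by norm_num)
    rw [add_zero, mul_one, ← one_div] at this
    refine this.congr' ?_
    filter_upwards [eventually_gt_atTop 2] with ν hν
    obtain ⟨hlo, hhi⟩ := gam_mem_Ioo d hν
    have : 1 + gam d ν ≠ 0 := by linarith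
    simp only [k, s]
    field_simp [hhi.ne]
  have hk_div (b : ℝ) : Tendsto (fun ν => k ν / (ν + b)) atTop (𝓝 (1 / 2)) := by
    refine ((tendsto_add_div_add_atTop d b).div_const 2).congr fun ν => ?_
    simp only [k, neg_one_div_gam]
    ring
  have hpow {x : ℝ} (hx : 0 < x) : Tendsto (fun ν => x ^ s ν) atTop (𝓝 1) := by
    simpa using tendsto_const_nhds.rpow (tendsto_nhdsWithin_iff.mp hs).1 (Or.inl hx.ne')
  have hlim := (((tendsto_mul_rpow_sub_one hc hs hks).sub (tendsto_mul_rpow_sub_one ha hs hks)).add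
    ((hpow ha).mul ((hk_div (-2)).const_mul (-(d : ℝ))))).add
    ((hpow hc).mul (((hk_div (-2)).const_mul t).add ((hk_div 0).const_mul q)))
  convert hlim.congr fun ν => ?_ using 2
  · ring
  · simp only [add_zero, ← sub_eq_add_neg]
    ring

/-- As ν → ∞ (equivalently γ → 0), the closed-form γ-power divergence between
t-distributions converges to the KL divergence of the limiting Gaussians. -/
theorem stmt_7 (d : ℕ) (μ₀ μ₁ : Fin d → ℝ) (S₀ S₁ : Matrix (Fin d) (Fin d) ℝ)
    (hS₀ : S₀.PosDef) (hS₁ : S₁.PosDef) :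
    Tendsto (Dgamma_tt d μ₀ μ₁ S₀ S₁) atTop (nhds (klGauss d μ₀ μ₁ S₀ S₁)) := by
  have hlim := ((tendsto_tC_rpow d).mul (tendsto_one_add_div_rpow d)).mul
    (tendsto_neg_one_div_gam_mul_bracket d hS₀.det_pos hS₁.det_pos (S₁⁻¹ * S₀).trace
      ((μ₀ - μ₁) ⬝ᵥ (S₁⁻¹ *ᵥ (μ₀ - μ₁))))
  convert hlim.congr fun ν => ?_ using 2
  · rw [klGauss, log_div hS₁.det_pos.ne' hS₀.det_pos.ne']
    ring
  · rw [Dgamma_tt]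
    ring
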